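/- arXiv:2507.18963 — 6 statements merged into one kernel-verified Lean document; each statement's English description precedes it below -/
import Mathlib

section
/- Let R be a commutative ring that is an algebra over ℂ, let n ≥ 1, let A be an upper unitriangular n×n matrix over R and let Z be a symmetric n×n matrix over R. Then there exist symmetric n×n matrices Z₁, Z₂, Z₃, Z₄, Z₅, Z₆, Z₇ over R such that M⁻(A,Z) = M⁻(Z₁)·M⁺(Z₂)·M⁻(Z₃)·M⁺(Z₄)·M⁻(Z₅)·M⁺(Z₆)·M⁻(Z₇). (This is the ring-theoretic form, with R playing the role of the ring of holomorphic functions on a Stein space, of the theorem that every lower unitriangular Ω̃-symplectic matrix is a product of 7 unitriangular symplectic matrices with respect to the standard symplectic form.) -/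
/-!
Write `Φ(X) = Mdiag X = [[X⁻ᵀ, 0], [0, X]]`, so that `M⁻(A,Z) = M⁻(Z) Φ(A)`. Conjugation by
`Φ(V)` turns `M⁻(S)` and `M⁺(S)` into `M⁻(V S Vᵀ)` and `M⁺(V⁻ᵀ S V⁻¹)`, and for a symmetric
invertible `D` we have `Φ(D) = M⁻(D² - D) M⁺(D⁻¹) M⁻(1 - D) M⁺(-1)`. Hence if
`A = V D V⁻¹ D⁻¹`, then `Φ(A) = (Φ(V) Φ(D) Φ(V)⁻¹) Φ(D)⁻¹` is a conjugate of this four-letter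
word followed by its inverse; the two middle `M⁺` letters merge and `M⁻(Z)` is absorbed into the
first letter, leaving seven.

Such a factorization exists with `D = diag(1, …, n)`: `A D` is upper triangular with diagonal
`1, …, n`, whose differences are units in a `ℂ`-algebra, so it is diagonalized by a unitriangular
`V`.
-/

open Matrix

/-- `M⁻(G) = [[Iₙ, 0], [G, Iₙ]]`. -/
def Mneg {R : Type*} [CommRing R] {n : ℕ} (G : Matrix (Fin n) (Fin n) R) :
    Matrix (Fin n ⊕ Fin n) (Fin n ⊕ Fin n) R :=
  Matrix.fromBlocks 1 0 G 1

/-- `M⁺(G) = [[Iₙ, G], [0, Iₙ]]`. -/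
def Mpos {R : Type*} [CommRing R] {n : ℕ} (G : Matrix (Fin n) (Fin n) R) :
    Matrix (Fin n ⊕ Fin n) (Fin n ⊕ Fin n) R :=
  Matrix.fromBlocks 1 G 0 1

/-- `M⁻(A,Z) = [[Iₙ,0],[Z,Iₙ]]·[[A⁻ᵀ,0],[0,A]]`. -/
noncomputable def MnegAZ {R : Type*} [CommRing R] {n : ℕ}
    (A Z : Matrix (Fin n) (Fin n) R) :
    Matrix (Fin n ⊕ Fin n) (Fin n ⊕ Fin n) R :=
  Matrix.fromBlocks 1 0 Z 1 * Matrix.fromBlocks (Aᵀ)⁻¹ 0 0 A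

/-- Upper triangular with all diagonal entries `1`. -/
def IsUpperUnitriangular {R : Type*} [CommRing R] {n : ℕ}
    (A : Matrix (Fin n) (Fin n) R) : Prop :=
  (∀ i, A i i = 1) ∧ ∀ i j : Fin n, j < i → A i j = 0

open Polynomial

theorem Matrix.IsSymm.mul_mul_transpose {m R : Type*} [Fintype m] [CommSemiring R]
    {S : Matrix m m R} (hS : S.IsSymm) (X : Matrix m m R) : (X * S * Xᵀ).IsSymm := by
  rw [IsSymm, transpose_mul, transpose_mul, transpose_transpose, hS.eq, Matrix.mul_assoc]

theorem Matrix.IsSymm.transpose_mul_mul {m R : Type*} [Fintype m] [CommSemiring R]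
    {S : Matrix m m R} (hS : S.IsSymm) (X : Matrix m m R) : (Xᵀ * S * X).IsSymm := by
  simpa using hS.mul_mul_transpose Xᵀ

section Triangular

variable {m R : Type*} [Fintype m] [LinearOrder m] [CommRing R]

theorem Matrix.IsUpperTriangular.mul_apply_self {M N : Matrix m m R} (hM : M.IsUpperTriangular)
    (hN : N.IsUpperTriangular) (i : m) : (M * N) i i = M i i * N i i := by
  rw [mul_apply]
  refine Finset.sum_eq_single_of_mem i (Finset.mem_univ i) fun k _ hki => ?_
  rcases lt_or_gt_of_ne hki with h | h
  · rw [hM h, zero_mul]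
  · rw [hN h, mul_zero]

theorem Matrix.IsUpperTriangular.aeval {B : Matrix m m R} (hB : B.IsUpperTriangular) (p : R[X]) :
    (Polynomial.aeval B p).IsUpperTriangular := by
  have h := (Polynomial.aeval (⟨B, hB⟩ : blockTriangularSubalgebra R R (id : m → m)) p).2
  rwa [aeval_subalgebra_coe] at h

theorem Matrix.IsUpperTriangular.aeval_apply_self {B : Matrix m m R} (hB : B.IsUpperTriangular)
    (p : R[X]) (i : m) : Polynomial.aeval B p i i = p.eval (B i i) := by
  induction p using Polynomial.induction_on with
  | C a => simp [algebraMap_eq_diagonal]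
  | add p q hp hq => simp [hp, hq]
  | monomial k a ih =>
    rw [pow_succ, ← mul_assoc, map_mul, aeval_X, (hB.aeval _).mul_apply_self hB, ih]
    simp

/-- The `j`-th column of `∏_{k ≠ j} (B - B k k)` is, by Cayley–Hamilton, an eigenvector of `B`
for the eigenvalue `B j j`; its `j`-th entry `∏_{k ≠ j} (B j j - B k k)` is a unit. -/
theorem Matrix.IsUpperTriangular.exists_unitriangular_mul_diagonal {B : Matrix m m R}
    (hB : B.IsUpperTriangular) (hdiag : Pairwise fun i j => IsUnit (B i i - B j j)) :
    ∃ V : Matrix m m R, V.IsUpperTriangular ∧ (∀ i, V i i = 1) ∧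
      B * V = V * diagonal fun i => B i i := by
  let p : m → R[X] := fun j => ∏ k ∈ Finset.univ.erase j, (X - C (B k k))
  have hBp (j : m) : B * Polynomial.aeval B (p j) = B j j • Polynomial.aeval B (p j) := by
    have hχ : (X - C (B j j)) * p j = B.charpoly := by
      rw [charpoly_of_isUpperTriangular B hB]
      exact Finset.mul_prod_erase _ (fun k => X - C (B k k)) (Finset.mem_univ j)
    have h := congrArg (Polynomial.aeval B) hχ
    rwa [aeval_self_charpoly, map_mul, map_sub, aeval_X, aeval_C, sub_mul, sub_eq_zero,
      ← Algebra.smul_def] at h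
  have hunit (j : m) : IsUnit (Polynomial.aeval B (p j) j j) := by
    rw [hB.aeval_apply_self, eval_prod, IsUnit.prod_iff]
    intro k hk
    simpa using hdiag (Finset.ne_of_mem_erase hk).symm
  refine ⟨of fun i j => Polynomial.aeval B (p j) i j * ↑(hunit j).unit⁻¹, fun i j hij => ?_,
    fun i => ?_, ?_⟩
  · simp [hB.aeval (p j) hij]
  · simp
  · ext i j
    have h := congrFun (congrFun (hBp j) i) j
    simp only [mul_apply, smul_apply, smul_eq_mul] at h
    rw [mul_diagonal, mul_apply]
    simp only [of_apply, ← mul_assoc, ← Finset.sum_mul, h]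
    ring

theorem Matrix.IsUpperTriangular.exists_eq_commutator {A : Matrix m m R}
    (hA : A.IsUpperTriangular) (hA1 : ∀ i, A i i = 1) {δ : m → R} (hδ : ∀ i, IsUnit (δ i))
    (hδδ : Pairwise fun i j => IsUnit (δ i - δ j)) :
    ∃ V D : Matrix m m R, IsUnit V.det ∧ D.IsSymm ∧ IsUnit D.det ∧
      A = V * D * V⁻¹ * D⁻¹ := by
  have hB : (A * diagonal δ).IsUpperTriangular := hA.mul (blockTriangular_diagonal δ)
  have hBdiag (i : m) : (A * diagonal δ) i i = δ i := by simp [mul_diagonal, hA1]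
  obtain ⟨V, hVtri, hV1, hBV⟩ :=
    hB.exists_unitriangular_mul_diagonal fun i j hij => by simpa only [hBdiag] using hδδ hij
  simp only [hBdiag] at hBV
  have hV : IsUnit V.det := by simp [det_of_isUpperTriangular hVtri, hV1]
  have hD : IsUnit (diagonal δ).det := by
    rw [← isUnit_iff_isUnit_det, isUnit_diagonal, Pi.isUnit_iff]
    exact hδ
  refine ⟨V, diagonal δ, hV, isSymm_diagonal δ, hD, ?_⟩
  calc A = A * diagonal δ * V * V⁻¹ * (diagonal δ)⁻¹ := by
        simp [Matrix.mul_assoc, hV, mul_nonsing_inv _ hD]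
    _ = V * diagonal δ * V⁻¹ * (diagonal δ)⁻¹ := by rw [hBV]

end Triangular

theorem exists_isUnit_and_pairwise_isUnit_sub (K R : Type*) [Field K] [CharZero K] [CommRing R]
    [Algebra K R] (n : ℕ) :
    ∃ δ : Fin n → R, (∀ i, IsUnit (δ i)) ∧ Pairwise fun i j => IsUnit (δ i - δ j) := by
  refine ⟨fun i => algebraMap K R ((i : ℕ) + 1), fun i => ?_, fun i j hij => ?_⟩
  · exact (IsUnit.mk0 _ (Nat.cast_add_one_ne_zero _)).map _
  · dsimp only
    rw [← map_sub]
    refine (IsUnit.mk0 _ ?_).map _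
    simpa [sub_eq_zero, Fin.val_inj] using hij

section Symplectic

variable {R : Type*} [CommRing R] {n : ℕ}

noncomputable def Mdiag (X : Matrix (Fin n) (Fin n) R) :
    Matrix (Fin n ⊕ Fin n) (Fin n ⊕ Fin n) R :=
  fromBlocks (Xᵀ)⁻¹ 0 0 X

theorem MnegAZ_eq (A Z : Matrix (Fin n) (Fin n) R) : MnegAZ A Z = Mneg Z * Mdiag A := rfl

theorem Mneg_mul_Mneg (G H : Matrix (Fin n) (Fin n) R) : Mneg G * Mneg H = Mneg (G + H) := by
  simp [Mneg, fromBlocks_multiply]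

theorem Mpos_mul_Mpos (G H : Matrix (Fin n) (Fin n) R) : Mpos G * Mpos H = Mpos (G + H) := by
  simp [Mpos, fromBlocks_multiply, add_comm H G]

theorem Mdiag_mul (X Y : Matrix (Fin n) (Fin n) R) : Mdiag (X * Y) = Mdiag X * Mdiag Y := by
  simp [Mdiag, fromBlocks_multiply, transpose_mul, Matrix.mul_inv_rev]

theorem Mdiag_mul_Mdiag_inv {X : Matrix (Fin n) (Fin n) R} (hX : IsUnit X.det) :
    Mdiag X * Mdiag X⁻¹ = 1 := by
  rw [← Mdiag_mul, mul_nonsing_inv X hX]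
  simp [Mdiag, fromBlocks_one]

theorem Mdiag_mul_Mneg {X : Matrix (Fin n) (Fin n) R} (hX : IsUnit X.det)
    (S : Matrix (Fin n) (Fin n) R) : Mdiag X * Mneg S = Mneg (X * S * Xᵀ) * Mdiag X := by
  simp [Mdiag, Mneg, fromBlocks_multiply, Matrix.mul_assoc,
    mul_nonsing_inv _ (isUnit_det_transpose X hX)]

theorem Mdiag_mul_Mpos {X : Matrix (Fin n) (Fin n) R} (hX : IsUnit X.det)
    (S : Matrix (Fin n) (Fin n) R) : Mdiag X * Mpos S = Mpos (X⁻¹ᵀ * S * X⁻¹) * Mdiag X := by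
  simp [Mdiag, Mpos, fromBlocks_multiply, Matrix.mul_assoc, nonsing_inv_mul _ hX,
    transpose_nonsing_inv]

/-- A symplectic `[[P, Q], [R, S]]` with `Q` invertible is `M⁻((S - 1) Q⁻¹) M⁺(Q) M⁻(Q⁻¹ (P - 1))`;
apply this to `Mdiag D * Mpos 1 = [[D⁻¹, D⁻¹], [0, D]]`. -/
theorem Mdiag_eq_of_isSymm {D : Matrix (Fin n) (Fin n) R} (hD : D.IsSymm) (hdet : IsUnit D.det) :
    Mdiag D = Mneg (D ^ 2 - D) * Mpos D⁻¹ * Mneg (1 - D) * Mpos (-1) := by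
  simp only [Mdiag, Mneg, Mpos, fromBlocks_multiply, hD.eq, fromBlocks_inj]
  refine ⟨?_, ?_, ?_, ?_⟩ <;>
  simp [sq, Matrix.mul_sub, Matrix.sub_mul, Matrix.mul_assoc, hdet]

theorem Mdiag_inv_eq_of_isSymm {D : Matrix (Fin n) (Fin n) R} (hD : D.IsSymm)
    (hdet : IsUnit D.det) :
    Mdiag D⁻¹ = Mpos 1 * Mneg (D - 1) * Mpos (-D⁻¹) * Mneg (D - D ^ 2) := by
  simp only [Mdiag, Mneg, Mpos, fromBlocks_multiply, transpose_nonsing_inv, hD.eq,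
    nonsing_inv_nonsing_inv _ hdet, fromBlocks_inj]
  refine ⟨?_, ?_, ?_, ?_⟩ <;>
  simp [sq, Matrix.mul_sub, Matrix.sub_mul, hdet]

theorem Mdiag_commutator_eq {V D : Matrix (Fin n) (Fin n) R} (hV : IsUnit V.det)
    (hD : D.IsSymm) (hDdet : IsUnit D.det) :
    Mdiag (V * D * V⁻¹ * D⁻¹) =
      Mneg (V * (D ^ 2 - D) * Vᵀ) * Mpos (V⁻¹ᵀ * D⁻¹ * V⁻¹) * Mneg (V * (1 - D) * Vᵀ) *
        Mpos (V⁻¹ᵀ * (-1) * V⁻¹ + 1) * Mneg (D - 1) * Mpos (-D⁻¹) * Mneg (D - D ^ 2) := by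
  have hneg (S M) : Mdiag V * (Mneg S * M) = Mneg (V * S * Vᵀ) * (Mdiag V * M) := by
    rw [← mul_assoc, Mdiag_mul_Mneg hV, mul_assoc]
  have hpos (S M) : Mdiag V * (Mpos S * M) = Mpos (V⁻¹ᵀ * S * V⁻¹) * (Mdiag V * M) := by
    rw [← mul_assoc, Mdiag_mul_Mpos hV, mul_assoc]
  have hinv (M) : Mdiag V * (Mdiag V⁻¹ * M) = M := by
    rw [← mul_assoc, Mdiag_mul_Mdiag_inv hV, one_mul]
  rw [Mdiag_mul, Mdiag_mul, Mdiag_mul, Mdiag_eq_of_isSymm hD hDdet,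
    Mdiag_inv_eq_of_isSymm hD hDdet, ← Mpos_mul_Mpos (V⁻¹ᵀ * (-1) * V⁻¹) 1]
  simp only [mul_assoc, hneg, hpos, hinv]

end Symplectic

theorem stmt0_general {R : Type*} [CommRing R] [Algebra ℂ R] {n : ℕ}
    (A Z : Matrix (Fin n) (Fin n) R)
    (hA : IsUpperUnitriangular A) (hZ : Z.IsSymm) :
    ∃ Z₁ Z₂ Z₃ Z₄ Z₅ Z₆ Z₇ : Matrix (Fin n) (Fin n) R,
      Z₁.IsSymm ∧ Z₂.IsSymm ∧ Z₃.IsSymm ∧ Z₄.IsSymm ∧ Z₅.IsSymm ∧ Z₆.IsSymm ∧ Z₇.IsSymm ∧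
      MnegAZ A Z = Mneg Z₁ * Mpos Z₂ * Mneg Z₃ * Mpos Z₄ * Mneg Z₅ * Mpos Z₆ * Mneg Z₇ := by
  obtain ⟨δ, hδ, hδδ⟩ := exists_isUnit_and_pairwise_isUnit_sub ℂ R n
  obtain ⟨V, D, hV, hD, hDdet, rfl⟩ :=
    IsUpperTriangular.exists_eq_commutator (fun i j hij => hA.2 i j hij) hA.1 hδ hδδ
  refine ⟨Z + V * (D ^ 2 - D) * Vᵀ, V⁻¹ᵀ * D⁻¹ * V⁻¹, V * (1 - D) * Vᵀ,
    V⁻¹ᵀ * (-1) * V⁻¹ + 1, D - 1, -D⁻¹, D - D ^ 2,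
    hZ.add (((hD.pow 2).sub hD).mul_mul_transpose V), hD.inv.transpose_mul_mul V⁻¹,
    (isSymm_one.sub hD).mul_mul_transpose V,
    (isSymm_one.neg.transpose_mul_mul V⁻¹).add isSymm_one,
    hD.sub isSymm_one, hD.inv.neg, hD.sub (hD.pow 2), ?_⟩
  rw [MnegAZ_eq, Mdiag_commutator_eq hV hD hDdet]
  simp only [← mul_assoc, Mneg_mul_Mneg]

theorem stmt0 {R : Type*} [CommRing R] [Algebra ℂ R] {n : ℕ} (hn : 1 ≤ n)
    (A Z : Matrix (Fin n) (Fin n) R)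
    (hA : IsUpperUnitriangular A) (hZ : Z.IsSymm) :
    ∃ Z₁ Z₂ Z₃ Z₄ Z₅ Z₆ Z₇ : Matrix (Fin n) (Fin n) R,
      Z₁.IsSymm ∧ Z₂.IsSymm ∧ Z₃.IsSymm ∧ Z₄.IsSymm ∧ Z₅.IsSymm ∧ Z₆.IsSymm ∧ Z₇.IsSymm ∧
      MnegAZ A Z = Mneg Z₁ * Mpos Z₂ * Mneg Z₃ * Mpos Z₄ * Mneg Z₅ * Mpos Z₆ * Mneg Z₇ :=
  stmt0_general A Z hA hZ
end

section
/- Let R be a commutative ring that is an algebra over ℂ, let n ≥ 1, and let λ₁, …, λₙ be pairwise distinct complex numbers. Let A be an upper triangular n×n matrix over R whose i-th diagonal entry equals λᵢ·1_R for each i. Then there exists an upper unitriangular n×n matrix K over R (which is automatically invertible) such that A = K·Λ·K⁻¹, where Λ is the diagonal matrix with diagonal entries λ₁·1_R, …, λₙ·1_R. -/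
/-!
Column `j` of `K` is an eigenvector of `A` for the eigenvalue `λⱼ`, found by back substitution
in `(A - λⱼ) v = 0` with `vⱼ = 1` and `vₖ = 0` for `k > j`: the equation in row `i < j` reads
`(λⱼ - λᵢ) vᵢ = ∑_{i < k ≤ j} A i k vₖ`, which is solvable because `λⱼ - λᵢ` is a nonzero
complex number, hence a unit of `R`. Then `A K = K Λ`, and `K` is invertible since
`det K = 1`.
-/

open Matrix Finset

namespace Matrix

theorem IsUpperTriangular.mul_apply {m R : Type*} [Fintype m] [LinearOrder m]
    [LocallyFiniteOrder m] [NonUnitalNonAssocSemiring R] {A B : Matrix m m R}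
    (hA : A.IsUpperTriangular) (hB : B.IsUpperTriangular) (i j : m) :
    (A * B) i j = ∑ k ∈ Icc i j, A i k * B k j := by
  rw [Matrix.mul_apply]
  refine (sum_subset (subset_univ _) fun k _ hk => ?_).symm
  rw [mem_Icc, not_and_or, not_le, not_le] at hk
  rcases hk with hki | hjk
  · rw [hA hki, zero_mul]
  · rw [hB hjk, mul_zero]

end Matrix

namespace IsUpperUnitriangular

variable {R : Type*} [CommRing R] {n : ℕ} {K : Matrix (Fin n) (Fin n) R}

theorem isUpperTriangular (hK : IsUpperUnitriangular K) : K.IsUpperTriangular :=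
  fun i j h => hK.2 i j h

theorem det_eq_one (hK : IsUpperUnitriangular K) : K.det = 1 := by
  rw [det_of_isUpperTriangular hK.isUpperTriangular]
  exact prod_eq_one fun i _ => hK.1 i

end IsUpperUnitriangular

namespace Matrix

variable {R : Type*} [CommRing R] {n : ℕ}

noncomputable def upperEigenvectors (A : Matrix (Fin n) (Fin n) R) (i j : Fin n) : R :=
  if _ : i < j then
    Ring.inverse (A j j - A i i) * ∑ k ∈ (Ioc i j).attach, A i k * upperEigenvectors A k j
  else if i = j then 1 else 0
termination_by j.val - i.val
decreasing_by have := mem_Ioc.mp k.2; omega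

variable (A : Matrix (Fin n) (Fin n) R)

theorem upperEigenvectors_self (i : Fin n) : upperEigenvectors A i i = 1 := by
  rw [upperEigenvectors]; simp

theorem upperEigenvectors_of_lt {i j : Fin n} (h : j < i) : upperEigenvectors A i j = 0 := by
  rw [upperEigenvectors, dif_neg h.not_gt, if_neg h.ne']

theorem isUpperUnitriangular_upperEigenvectors :
    IsUpperUnitriangular (of (upperEigenvectors A)) :=
  ⟨upperEigenvectors_self A, fun _ _ => upperEigenvectors_of_lt A⟩

variable {A}

theorem sub_mul_upperEigenvectors (hA : ∀ i j, i < j → IsUnit (A j j - A i i)) {i j : Fin n}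
    (hij : i ≤ j) :
    (A j j - A i i) * upperEigenvectors A i j =
      ∑ k ∈ Ioc i j, A i k * upperEigenvectors A k j := by
  rcases hij.lt_or_eq with hij | rfl
  · rw [upperEigenvectors, dif_pos hij,
      sum_attach (Ioc i j) fun k => A i k * upperEigenvectors A k j,
      Ring.mul_inverse_cancel_left _ _ (hA i j hij)]
  · simp

theorem mul_upperEigenvectors (hAtri : A.IsUpperTriangular)
    (hA : ∀ i j, i < j → IsUnit (A j j - A i i)) :
    A * of (upperEigenvectors A) = of (upperEigenvectors A) * diagonal A.diag := by
  ext i j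
  rw [mul_diagonal, hAtri.mul_apply (isUpperUnitriangular_upperEigenvectors A).isUpperTriangular]
  rcases le_or_gt i j with hij | hij
  · rw [← Ioc_insert_left hij, sum_insert left_notMem_Ioc]
    simp only [of_apply, diag_apply]
    rw [← sub_mul_upperEigenvectors hA hij]
    ring
  · rw [Icc_eq_empty_of_lt hij, sum_empty, of_apply, upperEigenvectors_of_lt A hij, zero_mul]

end Matrix

theorem stmt2_general {R : Type*} [CommRing R] [Algebra ℂ R] {n : ℕ}
    (lam : Fin n → ℂ) (hlam : Function.Injective lam)
    (A : Matrix (Fin n) (Fin n) R)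
    (hAtri : ∀ i j : Fin n, j < i → A i j = 0)
    (hAdiag : ∀ i, A i i = algebraMap ℂ R (lam i)) :
    ∃ K : Matrix (Fin n) (Fin n) R, IsUpperUnitriangular K ∧
      A = K * Matrix.diagonal (fun i => algebraMap ℂ R (lam i)) * K⁻¹ := by
  have hdiag : (fun i => algebraMap ℂ R (lam i)) = A.diag := funext fun i => (hAdiag i).symm
  have hunit : ∀ i j, i < j → IsUnit (A j j - A i i) := fun i j hij => by
    rw [hAdiag, hAdiag, ← map_sub]
    exact (IsUnit.mk0 _ (sub_ne_zero.2 (hlam.ne hij.ne'))).map _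
  have hK := isUpperUnitriangular_upperEigenvectors A
  refine ⟨_, hK, ?_⟩
  rw [hdiag, ← mul_upperEigenvectors (fun i j h => hAtri i j h) hunit,
    mul_nonsing_inv_cancel_right _ _ (hK.det_eq_one ▸ isUnit_one)]

theorem stmt2 {R : Type*} [CommRing R] [Algebra ℂ R] {n : ℕ} (hn : 1 ≤ n)
    (lam : Fin n → ℂ) (hlam : Function.Injective lam)
    (A : Matrix (Fin n) (Fin n) R)
    (hAtri : ∀ i j : Fin n, j < i → A i j = 0)
    (hAdiag : ∀ i, A i i = algebraMap ℂ R (lam i)) :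
    ∃ K : Matrix (Fin n) (Fin n) R, IsUpperUnitriangular K ∧
      A = K * Matrix.diagonal (fun i => algebraMap ℂ R (lam i)) * K⁻¹ :=
  stmt2_general lam hlam A hAtri hAdiag
end

section
/- Let R be a commutative ring that is an algebra over ℂ, let n ≥ 1, and let λ₁, …, λₙ be pairwise distinct complex numbers. Let A be a lower triangular n×n matrix over R whose i-th diagonal entry equals λᵢ·1_R for each i. Then there exists a lower unitriangular n×n matrix K over R (which is automatically invertible) such that A = K·Λ·K⁻¹, where Λ is the diagonal matrix with diagonal entries λ₁·1_R, …, λₙ·1_R. -/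
open Matrix

/-- Lower triangular with all diagonal entries `1`. -/
def IsLowerUnitriangular {R : Type*} [CommRing R] {n : ℕ}
    (A : Matrix (Fin n) (Fin n) R) : Prop :=
  (∀ i, A i i = 1) ∧ ∀ i j : Fin n, i < j → A i j = 0

/-!
The columns of `K` are eigenvectors of `A`: column `j` vanishes above row `j`, is `1` in row `j`,
and `A K = K Λ` read off in row `i > j` says `(λⱼ - λᵢ) K i j = ∑_{j ≤ k < i} A i k K k j`.
Since `λⱼ - λᵢ` is a unit, this determines `K i j` from the rows above it. A unitriangular `K` has determinant `1`, so
`A K = K Λ` gives `A = K Λ K⁻¹`.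
-/

namespace Matrix

variable {m R : Type*} [Fintype m] [LinearOrder m] [LocallyFiniteOrder m]
  [NonUnitalNonAssocSemiring R] {A B : Matrix m m R}

theorem mul_apply_eq_sum_Icc_of_isLowerTriangular
    (hA : A.IsLowerTriangular) (hB : B.IsLowerTriangular) (i j : m) :
    (A * B) i j = ∑ k ∈ Finset.Icc j i, A i k * B k j := by
  rw [mul_apply]
  refine (Finset.sum_subset (Finset.subset_univ _) fun k _ hk => ?_).symm
  rcases not_and_or.mp (Finset.mem_Icc.not.mp hk) with hjk | hki
  · rw [hB (not_le.mp hjk), mul_zero]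
  · rw [hA (not_le.mp hki), zero_mul]

theorem IsLowerTriangular.mul_apply_self
    (hA : A.IsLowerTriangular) (hB : B.IsLowerTriangular) (i : m) :
    (A * B) i i = A i i * B i i := by
  rw [mul_apply_eq_sum_Icc_of_isLowerTriangular hA hB, Finset.Icc_self, Finset.sum_singleton]

theorem IsLowerTriangular.mul_apply_of_lt
    (hA : A.IsLowerTriangular) (hB : B.IsLowerTriangular) {i j : m} (hji : j < i) :
    (A * B) i j = A i i * B i j + ∑ k ∈ Finset.Ico j i, A i k * B k j := by
  rw [mul_apply_eq_sum_Icc_of_isLowerTriangular hA hB, ← Finset.Ico_insert_right hji.le,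
    Finset.sum_insert Finset.right_notMem_Ico]

end Matrix

theorem IsLowerUnitriangular.isLowerTriangular {R : Type*} [CommRing R] {n : ℕ}
    {K : Matrix (Fin n) (Fin n) R} (hK : IsLowerUnitriangular K) : K.IsLowerTriangular :=
  fun i j => hK.2 i j

theorem IsLowerUnitriangular.det_eq_one {R : Type*} [CommRing R] {n : ℕ}
    {K : Matrix (Fin n) (Fin n) R} (hK : IsLowerUnitriangular K) : K.det = 1 := by
  rw [det_of_isLowerTriangular K hK.isLowerTriangular]
  simp [hK.1]

section LowerDiagonalizer

variable {R : Type*} [CommRing R] {n : ℕ} (d : Fin n → R) (A : Matrix (Fin n) (Fin n) R)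

/-- `Ring.inverse` is `0` on non-units, so this is only meaningful when the `d j - d i` are units. -/
noncomputable def lowerDiagonalizerEntry (i j : Fin n) : R :=
  if j < i then
    Ring.inverse (d j - d i) *
      ∑ k ∈ (Finset.Ico j i).attach, A i k.1 * lowerDiagonalizerEntry k.1 j
  else if i = j then 1 else 0
termination_by i
decreasing_by exact (Finset.mem_Ico.mp k.2).2

noncomputable def lowerDiagonalizer : Matrix (Fin n) (Fin n) R :=
  of (lowerDiagonalizerEntry d A)

theorem lowerDiagonalizer_apply_of_lt {i j : Fin n} (hji : j < i) :
    lowerDiagonalizer d A i j =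
      Ring.inverse (d j - d i) * ∑ k ∈ Finset.Ico j i, A i k * lowerDiagonalizer d A k j := by
  rw [lowerDiagonalizer, of_apply, lowerDiagonalizerEntry, if_pos hji,
    Finset.sum_attach (Finset.Ico j i) fun k => A i k * lowerDiagonalizerEntry d A k j]
  rfl

theorem isLowerUnitriangular_lowerDiagonalizer :
    IsLowerUnitriangular (lowerDiagonalizer d A) := by
  refine ⟨fun i => ?_, fun i j hij => ?_⟩
  · rw [lowerDiagonalizer, of_apply, lowerDiagonalizerEntry]
    simp
  · rw [lowerDiagonalizer, of_apply, lowerDiagonalizerEntry]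
    simp [not_lt.mpr hij.le, hij.ne]

theorem mul_lowerDiagonalizer (hA : A.IsLowerTriangular) (hAd : ∀ i, A i i = d i)
    (hd : Pairwise fun i j => IsUnit (d i - d j)) :
    A * lowerDiagonalizer d A = lowerDiagonalizer d A * diagonal d := by
  have hK := isLowerUnitriangular_lowerDiagonalizer d A
  ext i j
  rw [mul_diagonal]
  rcases lt_trichotomy j i with hji | rfl | hij
  · rw [hA.mul_apply_of_lt hK.isLowerTriangular hji, hAd, lowerDiagonalizer_apply_of_lt d A hji]
    set S := ∑ k ∈ Finset.Ico j i, A i k * lowerDiagonalizer d A k j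
    have hinv := Ring.mul_inverse_cancel _ (hd hji.ne)
    linear_combination (-S) * hinv
  · rw [hA.mul_apply_self hK.isLowerTriangular, hAd, hK.1, mul_one, one_mul]
  · rw [mul_apply_eq_sum_Icc_of_isLowerTriangular hA hK.isLowerTriangular,
      Finset.Icc_eq_empty_of_lt hij, Finset.sum_empty, hK.2 i j hij, zero_mul]

end LowerDiagonalizer

theorem stmt3_general {R : Type*} [CommRing R] [Algebra ℂ R] {n : ℕ}
    (lam : Fin n → ℂ) (hlam : Function.Injective lam)
    (A : Matrix (Fin n) (Fin n) R)
    (hAtri : ∀ i j : Fin n, i < j → A i j = 0)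
    (hAdiag : ∀ i, A i i = algebraMap ℂ R (lam i)) :
    ∃ K : Matrix (Fin n) (Fin n) R, IsLowerUnitriangular K ∧
      A = K * Matrix.diagonal (fun i => algebraMap ℂ R (lam i)) * K⁻¹ := by
  set d := fun i => algebraMap ℂ R (lam i)
  have hd : Pairwise fun i j => IsUnit (d i - d j) := fun i j hij => by
    simpa only [d, map_sub] using (sub_ne_zero.mpr (hlam.ne hij)).isUnit.map (algebraMap ℂ R)
  have hK := isLowerUnitriangular_lowerDiagonalizer d A
  have hKdet : IsUnit (lowerDiagonalizer d A).det := by rw [hK.det_eq_one]; exact isUnit_one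
  refine ⟨lowerDiagonalizer d A, hK, ?_⟩
  rw [← mul_lowerDiagonalizer d A (fun i j => hAtri i j) hAdiag hd,
    mul_nonsing_inv_cancel_right _ _ hKdet]

theorem stmt3 {R : Type*} [CommRing R] [Algebra ℂ R] {n : ℕ} (hn : 1 ≤ n)
    (lam : Fin n → ℂ) (hlam : Function.Injective lam)
    (A : Matrix (Fin n) (Fin n) R)
    (hAtri : ∀ i j : Fin n, i < j → A i j = 0)
    (hAdiag : ∀ i, A i i = algebraMap ℂ R (lam i)) :
    ∃ K : Matrix (Fin n) (Fin n) R, IsLowerUnitriangular K ∧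
      A = K * Matrix.diagonal (fun i => algebraMap ℂ R (lam i)) * K⁻¹ :=
  stmt3_general lam hlam A hAtri hAdiag
end

section
/- Let R be a commutative ring, n ≥ 1, and let Λ be an invertible diagonal n×n matrix over R. Then the 2n×2n block matrix [[Λ, 0], [0, Λ⁻¹]] equals the product M⁺(Λ − Iₙ)·M⁻(Iₙ)·M⁺(Λ⁻¹ − Iₙ)·M⁻(−Λ); moreover each of the four n×n matrices Λ − Iₙ, Iₙ, Λ⁻¹ − Iₙ, −Λ is symmetric, so each factor is a unitriangular symplectic matrix. -/
open Matrix

/- Multiplied out, the product is `[[A + (1 - A * B) * A, A * B - 1], [1 - B * A, B]]`, so it is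
`diag(A, B)` exactly when `B` is a two-sided inverse of `A`. -/
theorem fromBlocks_eq_unitriangular_mul {m α : Type*} [Fintype m] [DecidableEq m] [Ring α]
    {A B : Matrix m m α} (hAB : A * B = 1) (hBA : B * A = 1) :
    fromBlocks A 0 0 B =
      fromBlocks 1 (A - 1) 0 1 * fromBlocks 1 0 1 1 * fromBlocks 1 (B - 1) 0 1 *
        fromBlocks 1 0 (-A) 1 := by
  simp only [fromBlocks_multiply, add_mul, mul_sub, sub_mul, mul_neg, one_mul,
    mul_one, mul_zero, add_zero, zero_add, hAB, hBA, fromBlocks_inj]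
  refine ⟨by abel, by abel, by abel, by abel⟩

theorem stmt7_general {R : Type*} [CommRing R] {n : ℕ}
    (d : Fin n → R) (hd : IsUnit (Matrix.diagonal d)) :
    Matrix.fromBlocks (Matrix.diagonal d) 0 0 (Matrix.diagonal d)⁻¹ =
        Mpos (Matrix.diagonal d - 1) * Mneg 1 * Mpos ((Matrix.diagonal d)⁻¹ - 1) *
          Mneg (-(Matrix.diagonal d)) ∧
      (Matrix.diagonal d - 1).IsSymm ∧ (1 : Matrix (Fin n) (Fin n) R).IsSymm ∧
      ((Matrix.diagonal d)⁻¹ - 1).IsSymm ∧ (-(Matrix.diagonal d)).IsSymm := by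
  have hdet : IsUnit (diagonal d).det := (isUnit_iff_isUnit_det _).mp hd
  have hsymm : (diagonal d).IsSymm := isSymm_diagonal d
  exact ⟨fromBlocks_eq_unitriangular_mul (mul_nonsing_inv _ hdet) (nonsing_inv_mul _ hdet),
    hsymm.sub isSymm_one, isSymm_one, hsymm.inv.sub isSymm_one, hsymm.neg⟩

theorem stmt7 {R : Type*} [CommRing R] {n : ℕ} (hn : 1 ≤ n)
    (d : Fin n → R) (hd : IsUnit (Matrix.diagonal d)) :
    Matrix.fromBlocks (Matrix.diagonal d) 0 0 (Matrix.diagonal d)⁻¹ =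
        Mpos (Matrix.diagonal d - 1) * Mneg 1 * Mpos ((Matrix.diagonal d)⁻¹ - 1) *
          Mneg (-(Matrix.diagonal d)) ∧
      (Matrix.diagonal d - 1).IsSymm ∧ (1 : Matrix (Fin n) (Fin n) R).IsSymm ∧
      ((Matrix.diagonal d)⁻¹ - 1).IsSymm ∧ (-(Matrix.diagonal d)).IsSymm :=
  stmt7_general d hd
end

section
/- Let R be a commutative ring, n ≥ 1, and let P₁ and P₂ be invertible symmetric n×n matrices over R. Then the 2n×2n block matrix [[P₁P₂, 0], [0, P₁⁻¹P₂⁻¹]] equals the product M⁻(P₁⁻¹P₂⁻¹P₁⁻¹ − P₁⁻¹)·M⁺(P₁)·M⁻(P₂ − P₁⁻¹)·M⁺(−P₂⁻¹); moreover each of the four n×n matrices P₁⁻¹P₂⁻¹P₁⁻¹ − P₁⁻¹, P₁, P₂ − P₁⁻¹, −P₂⁻¹ is symmetric, so each factor is a unitriangular symplectic matrix. -/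
open Matrix

lemma Matrix.IsSymm.mul_mul_self {R ι : Type*} [CommSemiring R] [Fintype ι]
    {A B : Matrix ι ι R} (hA : A.IsSymm) (hB : B.IsSymm) : (A * B * A).IsSymm := by
  simp only [IsSymm, transpose_mul, hA.eq, hB.eq, Matrix.mul_assoc]

lemma Mneg_mul_Mpos_mul_Mneg_mul_Mpos {R : Type*} [CommRing R] {n : ℕ}
    (A B C D : Matrix (Fin n) (Fin n) R) :
    Mneg A * Mpos B * Mneg C * Mpos D =
      fromBlocks (1 + B * C) ((1 + B * C) * D + B)
        (A + (A * B + 1) * C) ((A + (A * B + 1) * C) * D + A * B + 1) := by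
  simp only [Mneg, Mpos, fromBlocks_multiply, fromBlocks_inj]
  refine ⟨?_, ?_, ?_, ?_⟩ <;> noncomm_ring

theorem stmt9_general {R : Type*} [CommRing R] {n : ℕ}
    (P₁ P₂ : Matrix (Fin n) (Fin n) R)
    (h₁ : IsUnit P₁) (h₂ : IsUnit P₂) (hs₁ : P₁.IsSymm) (hs₂ : P₂.IsSymm) :
    Matrix.fromBlocks (P₁ * P₂) 0 0 (P₁⁻¹ * P₂⁻¹) =
        Mneg (P₁⁻¹ * P₂⁻¹ * P₁⁻¹ - P₁⁻¹) * Mpos P₁ * Mneg (P₂ - P₁⁻¹) * Mpos (-P₂⁻¹) ∧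
      (P₁⁻¹ * P₂⁻¹ * P₁⁻¹ - P₁⁻¹).IsSymm ∧ P₁.IsSymm ∧ (P₂ - P₁⁻¹).IsSymm ∧
      (-P₂⁻¹).IsSymm := by
  rw [isUnit_iff_isUnit_det] at h₁ h₂
  have hl₁ := nonsing_inv_mul P₁ h₁
  have hr₁ := mul_nonsing_inv P₁ h₁
  have hl₂ := nonsing_inv_mul P₂ h₂
  have hr₂ := mul_nonsing_inv P₂ h₂
  refine ⟨?_, (hs₁.inv.mul_mul_self hs₂.inv).sub hs₁.inv, hs₁, hs₂.sub hs₁.inv, hs₂.inv.neg⟩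
  rw [Mneg_mul_Mpos_mul_Mneg_mul_Mpos, fromBlocks_inj]
  refine ⟨?_, ?_, ?_, ?_⟩ <;> noncomm_ring [hl₁, hr₁, hl₂, hr₂]

theorem stmt9 {R : Type*} [CommRing R] {n : ℕ} (hn : 1 ≤ n)
    (P₁ P₂ : Matrix (Fin n) (Fin n) R)
    (h₁ : IsUnit P₁) (h₂ : IsUnit P₂) (hs₁ : P₁.IsSymm) (hs₂ : P₂.IsSymm) :
    Matrix.fromBlocks (P₁ * P₂) 0 0 (P₁⁻¹ * P₂⁻¹) =
        Mneg (P₁⁻¹ * P₂⁻¹ * P₁⁻¹ - P₁⁻¹) * Mpos P₁ * Mneg (P₂ - P₁⁻¹) * Mpos (-P₂⁻¹) ∧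
      (P₁⁻¹ * P₂⁻¹ * P₁⁻¹ - P₁⁻¹).IsSymm ∧ P₁.IsSymm ∧ (P₂ - P₁⁻¹).IsSymm ∧
      (-P₂⁻¹).IsSymm :=
  stmt9_general P₁ P₂ h₁ h₂ hs₁ hs₂
end

section
/- Let R be a commutative ring, n ≥ 1, and let P denote the 2n×2n block matrix [[Iₙ, 0], [0, Lₙ]]. A 2n×2n matrix M over R is both upper unitriangular (upper triangular with all diagonal entries 1) and Ω̃-symplectic if and only if there exist an upper unitriangular n×n matrix A and a symmetric n×n matrix Z over R such that M = P·M⁺(A,Z)·P. -/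
/-!
An upper unitriangular `M` has block form `[[B, C], [0, D]]` with `B`, `D` unitriangular, and
`Mᵀ Ω̃ M = [[0, Bᵀ L D], [-(Bᵀ L D)ᵀ, Cᵀ L D - Dᵀ L C]]`. The off-diagonal condition
`Bᵀ L D = L` determines `D = L B⁻ᵀ L`, so `M = P M⁺(A, Z) P` with `A = B⁻¹` and `Z = C L Bᵀ`.
For such matrices the remaining block is `L A (Zᵀ - Z) Aᵀ L`, which vanishes exactly when `Z`
is symmetric, since `L A` and `Aᵀ L` are invertible.
-/

open Matrix

/-- `Lₙ`: the `n × n` matrix with `1` along the skew-diagonal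
(`(Lₙ)ᵢⱼ = 1` iff `i + j = n + 1` in 1-based indexing). -/
def Lmat {R : Type*} [CommRing R] (n : ℕ) : Matrix (Fin n) (Fin n) R :=
  Matrix.of fun i j : Fin n => if (i : ℕ) + (j : ℕ) = n - 1 then 1 else 0

/-- The symplectic form `Ω̃ = [[0, Lₙ], [−Lₙ, 0]]`. -/
def OmegaTilde {R : Type*} [CommRing R] (n : ℕ) :
    Matrix (Fin n ⊕ Fin n) (Fin n ⊕ Fin n) R :=
  Matrix.fromBlocks 0 (Lmat n) (-(Lmat n)) 0

/-- The block matrix `P = [[Iₙ, 0], [0, Lₙ]]`. -/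
def Pmat {R : Type*} [CommRing R] (n : ℕ) :
    Matrix (Fin n ⊕ Fin n) (Fin n ⊕ Fin n) R :=
  Matrix.fromBlocks 1 0 0 (Lmat n)

/-- `M⁺(A,Z) = [[Iₙ,Z],[0,Iₙ]]·[[A⁻¹,0],[0,Aᵀ]]`. -/
noncomputable def MposAZ {R : Type*} [CommRing R] {n : ℕ}
    (A Z : Matrix (Fin n) (Fin n) R) :
    Matrix (Fin n ⊕ Fin n) (Fin n ⊕ Fin n) R :=
  Matrix.fromBlocks 1 Z 0 1 * Matrix.fromBlocks A⁻¹ 0 0 Aᵀ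

/-- The position (0-based) of an index of a `2n × 2n` matrix written in block form. -/
def idx {n : ℕ} : Fin n ⊕ Fin n → ℕ := Sum.elim (fun i => (i : ℕ)) fun i => n + (i : ℕ)

/-- Upper triangular with all diagonal entries `1` (for `2n × 2n` matrices in block form). -/
def IsUpperUnitriangular2n {R : Type*} [CommRing R] {n : ℕ}
    (M : Matrix (Fin n ⊕ Fin n) (Fin n ⊕ Fin n) R) : Prop :=
  (∀ i, M i i = 1) ∧ ∀ i j : Fin n ⊕ Fin n, idx j < idx i → M i j = 0

section Lmat

variable {R : Type*} [CommRing R] {n : ℕ}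

theorem Lmat_apply (i j : Fin n) : Lmat (R := R) n i j = if j = i.rev then 1 else 0 := by
  have : (i : ℕ) + j = n - 1 ↔ j = i.rev := by
    rw [Fin.ext_iff, Fin.val_rev]
    omega
  simp [Lmat, this]

theorem Lmat_mul (X : Matrix (Fin n) (Fin n) R) : Lmat n * X = X.submatrix Fin.rev id := by
  ext i j
  simp [mul_apply, Lmat_apply, ite_mul]

theorem transpose_Lmat : (Lmat (R := R) n)ᵀ = Lmat n := by
  ext i j
  simp [Lmat, add_comm]

theorem mul_Lmat (X : Matrix (Fin n) (Fin n) R) : X * Lmat n = X.submatrix id Fin.rev := by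
  rw [← transpose_transpose (X * _), transpose_mul, transpose_Lmat, Lmat_mul]
  rfl

theorem Lmat_mul_Lmat : Lmat (R := R) n * Lmat n = 1 := by
  ext i j
  simp [Lmat_mul, Lmat_apply, one_apply, eq_comm]

theorem Lmat_mul_mul_Lmat_apply (X : Matrix (Fin n) (Fin n) R) (i j : Fin n) :
    (Lmat n * X * Lmat n : Matrix (Fin n) (Fin n) R) i j = X i.rev j.rev := by
  rw [mul_Lmat, Lmat_mul]
  rfl

theorem Lmat_mul_cancel_left (X : Matrix (Fin n) (Fin n) R) : Lmat n * (Lmat n * X) = X := by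
  rw [← Matrix.mul_assoc, Lmat_mul_Lmat, Matrix.one_mul]

end Lmat

theorem Matrix.IsUpperTriangular.mul_apply_self_s13 {m α : Type*} [Fintype m] [LinearOrder m]
    [NonUnitalNonAssocSemiring α] {A B : Matrix m m α} (hA : A.IsUpperTriangular)
    (hB : B.IsUpperTriangular) (i : m) : (A * B) i i = A i i * B i i := by
  refine Fintype.sum_eq_single i fun k hk => ?_
  rcases hk.lt_or_gt with hki | hik
  · exact mul_eq_zero_of_left (hA hki) _
  · exact mul_eq_zero_of_right _ (hB hik)

namespace IsUpperUnitriangular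

variable {R : Type*} [CommRing R] {n : ℕ} {A : Matrix (Fin n) (Fin n) R}

theorem isUpperTriangular_s13 (h : IsUpperUnitriangular A) : A.IsUpperTriangular :=
  fun i j hij => h.2 i j hij

theorem isUnit_det (h : IsUpperUnitriangular A) : IsUnit A.det := by
  simp [det_of_isUpperTriangular h.isUpperTriangular_s13, h.1]

theorem inv (h : IsUpperUnitriangular A) : IsUpperUnitriangular A⁻¹ := by
  let := A.invertibleOfIsUnitDet h.isUnit_det
  have hinv : A⁻¹.IsUpperTriangular :=
    blockTriangular_inv_of_blockTriangular h.isUpperTriangular_s13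
  refine ⟨fun i => ?_, fun i j hij => hinv hij⟩
  simpa [h.1, nonsing_inv_mul _ h.isUnit_det, eq_comm] using
    hinv.mul_apply_self_s13 h.isUpperTriangular_s13 i

theorem Lmat_mul_transpose_mul_Lmat (h : IsUpperUnitriangular A) :
    IsUpperUnitriangular (Lmat n * Aᵀ * Lmat n) := by
  refine ⟨fun i => ?_, fun i j hij => ?_⟩ <;> rw [Lmat_mul_mul_Lmat_apply, transpose_apply]
  · exact h.1 _
  · exact h.2 _ _ (Fin.rev_lt_rev.2 hij)

end IsUpperUnitriangular

theorem isUpperUnitriangular2n_fromBlocks_iff {R : Type*} [CommRing R] {n : ℕ}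
    {B C D E : Matrix (Fin n) (Fin n) R} :
    IsUpperUnitriangular2n (fromBlocks B C D E) ↔
      IsUpperUnitriangular B ∧ D = 0 ∧ IsUpperUnitriangular E := by
  constructor
  · intro h
    refine ⟨⟨fun i => h.1 (.inl i), fun i j hij => h.2 (.inl i) (.inl j) hij⟩, ?_,
      ⟨fun i => h.1 (.inr i), fun i j hij => h.2 (.inr i) (.inr j) (by simpa [idx] using hij)⟩⟩
    ext i j
    exact h.2 (.inr i) (.inl j) (by simp only [idx, Sum.elim_inl, Sum.elim_inr]; omega)
  · rintro ⟨hB, rfl, hE⟩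
    refine ⟨by rintro (i | i) <;> simp [hB.1, hE.1], ?_⟩
    rintro (i | i) (j | j) hij <;> simp only [idx, Sum.elim_inl, Sum.elim_inr] at hij
    · exact hB.2 i j hij
    · omega
    · rfl
    · exact hE.2 i j (by simpa using hij)

section Symplectic

variable {R : Type*} [CommRing R] {n : ℕ}

theorem transpose_fromBlocks_mul_OmegaTilde_mul (B C D : Matrix (Fin n) (Fin n) R) :
    (fromBlocks B C 0 D)ᵀ * OmegaTilde n * fromBlocks B C 0 D =
      fromBlocks 0 (Bᵀ * Lmat n * D) (-(Dᵀ * Lmat n * B))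
        (Cᵀ * Lmat n * D - Dᵀ * Lmat n * C) := by
  simp only [OmegaTilde, fromBlocks_transpose, fromBlocks_multiply, transpose_zero,
    Matrix.mul_zero, Matrix.zero_mul, Matrix.mul_neg, Matrix.neg_mul, add_zero, zero_add,
    neg_add_eq_sub, neg_zero]

theorem Pmat_mul_MposAZ_mul_Pmat (A Z : Matrix (Fin n) (Fin n) R) :
    Pmat n * MposAZ A Z * Pmat n =
      fromBlocks A⁻¹ (Z * Aᵀ * Lmat n) 0 (Lmat n * Aᵀ * Lmat n) := by
  simp only [Pmat, MposAZ, fromBlocks_multiply, Matrix.mul_one, Matrix.one_mul,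
    Matrix.mul_zero, Matrix.zero_mul, add_zero, zero_add, Matrix.mul_assoc]

theorem isUnit_Lmat : IsUnit (Lmat (R := R) n) := ⟨⟨_, _, Lmat_mul_Lmat, Lmat_mul_Lmat⟩, rfl⟩

theorem symplectic_Pmat_mul_MposAZ_mul_Pmat_iff {A : Matrix (Fin n) (Fin n) R}
    (hA : IsUnit A.det) (Z : Matrix (Fin n) (Fin n) R) :
    (Pmat n * MposAZ A Z * Pmat n)ᵀ * OmegaTilde n * (Pmat n * MposAZ A Z * Pmat n) =
      OmegaTilde n ↔ Z.IsSymm := by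
  have hAt : IsUnit Aᵀ.det := isUnit_det_transpose A hA
  have hLA : IsUnit (Lmat n * A) := isUnit_Lmat.mul ((isUnit_iff_isUnit_det A).2 hA)
  have hAL : IsUnit (Aᵀ * Lmat n) := ((isUnit_iff_isUnit_det _).2 hAt).mul isUnit_Lmat
  have h₁₂ : A⁻¹ᵀ * Lmat n * (Lmat n * Aᵀ * Lmat n) = Lmat n := by
    simp only [transpose_nonsing_inv, Matrix.mul_assoc, Lmat_mul_cancel_left,
      nonsing_inv_mul_cancel_left _ _ hAt]
  have h₂₁ : (Lmat n * Aᵀ * Lmat n)ᵀ * Lmat n * A⁻¹ = Lmat n := by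
    simp only [transpose_mul, transpose_transpose, transpose_Lmat, Matrix.mul_assoc,
      Lmat_mul_cancel_left, mul_nonsing_inv _ hA, Matrix.mul_one]
  have h₂₂ : (Z * Aᵀ * Lmat n)ᵀ * Lmat n * (Lmat n * Aᵀ * Lmat n) -
      (Lmat n * Aᵀ * Lmat n)ᵀ * Lmat n * (Z * Aᵀ * Lmat n) =
        Lmat n * A * ((Zᵀ - Z) * (Aᵀ * Lmat n)) := by
    simp only [transpose_mul, transpose_transpose, transpose_Lmat, Matrix.mul_assoc,
      Lmat_mul_cancel_left, Matrix.mul_sub, Matrix.sub_mul]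
  rw [Pmat_mul_MposAZ_mul_Pmat, transpose_fromBlocks_mul_OmegaTilde_mul, OmegaTilde,
    fromBlocks_inj, h₂₂, hLA.mul_right_eq_zero, hAL.mul_left_eq_zero, sub_eq_zero]
  simp only [h₁₂, h₂₁, true_and]
  rfl

theorem eq_Pmat_mul_MposAZ_mul_Pmat_of_symplectic {B C D : Matrix (Fin n) (Fin n) R}
    (hB : IsUnit B.det)
    (h : (fromBlocks B C 0 D)ᵀ * OmegaTilde n * fromBlocks B C 0 D = OmegaTilde n) :
    fromBlocks B C 0 D = Pmat n * MposAZ B⁻¹ (C * Lmat n * Bᵀ) * Pmat n := by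
  have hBt : IsUnit Bᵀ.det := isUnit_det_transpose B hB
  rw [transpose_fromBlocks_mul_OmegaTilde_mul, OmegaTilde, fromBlocks_inj] at h
  have hD : D = Lmat n * Bᵀ⁻¹ * Lmat n := by
    calc D = Lmat n * (Bᵀ⁻¹ * (Bᵀ * (Lmat n * D))) := by
          rw [nonsing_inv_mul_cancel_left _ _ hBt, Lmat_mul_cancel_left]
      _ = Lmat n * Bᵀ⁻¹ * Lmat n := by rw [← Matrix.mul_assoc Bᵀ, h.2.1, Matrix.mul_assoc]
  rw [Pmat_mul_MposAZ_mul_Pmat, nonsing_inv_nonsing_inv B hB, transpose_nonsing_inv, ← hD,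
    mul_nonsing_inv_cancel_right _ _ hBt, Matrix.mul_assoc, Lmat_mul_Lmat, Matrix.mul_one]

end Symplectic

theorem stmt13_general {R : Type*} [CommRing R] {n : ℕ}
    (M : Matrix (Fin n ⊕ Fin n) (Fin n ⊕ Fin n) R) :
    (IsUpperUnitriangular2n M ∧ Mᵀ * OmegaTilde n * M = OmegaTilde n) ↔
      ∃ A Z : Matrix (Fin n) (Fin n) R, IsUpperUnitriangular A ∧ Z.IsSymm ∧
        M = Pmat n * MposAZ A Z * Pmat n := by
  constructor
  · rintro ⟨hM, hsymp⟩
    rw [← fromBlocks_toBlocks M] at hM hsymp ⊢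
    obtain ⟨hB, hD, -⟩ := isUpperUnitriangular2n_fromBlocks_iff.1 hM
    rw [hD] at hsymp ⊢
    have hMP := eq_Pmat_mul_MposAZ_mul_Pmat_of_symplectic hB.isUnit_det hsymp
    rw [hMP] at hsymp
    exact ⟨_, _, hB.inv, (symplectic_Pmat_mul_MposAZ_mul_Pmat_iff hB.inv.isUnit_det _).1 hsymp,
      hMP⟩
  · rintro ⟨A, Z, hA, hZ, rfl⟩
    refine ⟨?_, (symplectic_Pmat_mul_MposAZ_mul_Pmat_iff hA.isUnit_det Z).2 hZ⟩
    rw [Pmat_mul_MposAZ_mul_Pmat]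
    exact isUpperUnitriangular2n_fromBlocks_iff.2 ⟨hA.inv, rfl, hA.Lmat_mul_transpose_mul_Lmat⟩

theorem stmt13 {R : Type*} [CommRing R] {n : ℕ} (hn : 1 ≤ n)
    (M : Matrix (Fin n ⊕ Fin n) (Fin n ⊕ Fin n) R) :
    (IsUpperUnitriangular2n M ∧ Mᵀ * OmegaTilde n * M = OmegaTilde n) ↔
      ∃ A Z : Matrix (Fin n) (Fin n) R, IsUpperUnitriangular A ∧ Z.IsSymm ∧
        M = Pmat n * MposAZ A Z * Pmat n :=
  stmt13_general M
end
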